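/- arXiv:2204.14067 — 3 statements merged into one kernel-verified Lean document; each statement's English description precedes it below -/
import Mathlib

section
/- If X has SVD X = Σ_{i=1}^k σ_i u_i v_i^T with σ_i > 0 and k = rank(X), then for any matrices W, H with W H^T = X and ‖X‖_* = (1/2)(‖W‖_F² + ‖H‖_F²), it holds that W^T U = H^T V, where U = [u_1,…,u_k] and V = [v_1,…,v_k]. -/
open Matrix

noncomputable def frobNorm {m n : ℕ} (X : Matrix (Fin m) (Fin n) ℝ) : ℝ :=
  Real.sqrt (∑ i, ∑ j, (X i j) ^ 2)

noncomputable def nuclearNorm {m n : ℕ} (X : Matrix (Fin m) (Fin n) ℝ) : ℝ :=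
  ∑ i, Real.sqrt ((show (Xᵀ * X).IsHermitian by
    simpa [Matrix.conjTranspose_eq_transpose_of_trivial] using
      Matrix.isHermitian_conjTranspose_mul_self X).eigenvalues i)

/-!
With `A = Wᵀ U` and `B = Hᵀ V` we have `⟪A, B⟫_F = tr (Uᵀ X V) = ∑ σᵢ`, while `‖A‖_F ≤ ‖W‖_F` and
`‖B‖_F ≤ ‖H‖_F` since `U`, `V` have orthonormal columns. Hence
`‖A - B‖_F² ≤ ‖W‖_F² + ‖H‖_F² - 2 ∑ σᵢ = 2 (‖X‖_* - ∑ σᵢ) ≤ 0`, the last step being the variational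
bound `‖X‖_* ≤ (‖W'‖_F² + ‖H'‖_F²) / 2` for the balanced factorization `W' = U diag √σ`,
`H' = V diag √σ`. The variational bound holds for every factorization `X = W Hᵀ`: writing
`‖X‖_* = tr (Qᵀ X P)` with partial isometries `Q`, `P` built from an eigenbasis of `Xᵀ X`, it is
the inequality `2 ⟪Wᵀ Q, Hᵀ P⟫_F ≤ ‖Wᵀ Q‖_F² + ‖Hᵀ P‖_F²`.
-/

namespace Matrix

variable {m n p : Type*} [Fintype m] [Fintype n] [Fintype p]

def IsPartialIsometry (Q : Matrix m n ℝ) : Prop :=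
  Q * Qᵀ * Q = Q

lemma isPartialIsometry_of_transpose_mul_self_eq_one {Q : Matrix m n ℝ} [DecidableEq n]
    (hQ : Qᵀ * Q = 1) : IsPartialIsometry Q := by
  rw [IsPartialIsometry, Matrix.mul_assoc, hQ, Matrix.mul_one]

lemma trace_transpose_mul_self_nonneg (A : Matrix m n ℝ) : 0 ≤ trace (Aᵀ * A) := by
  simpa only [conjTranspose_eq_transpose_of_trivial] using
    (posSemidef_conjTranspose_mul_self A).trace_nonneg

lemma trace_transpose_mul_self_eq_zero_iff {A : Matrix m n ℝ} : trace (Aᵀ * A) = 0 ↔ A = 0 := by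
  simpa only [conjTranspose_eq_transpose_of_trivial] using
    trace_conjTranspose_mul_self_eq_zero_iff (A := A)

lemma trace_transpose_mul_comm (A B : Matrix m n ℝ) : trace (Bᵀ * A) = trace (Aᵀ * B) := by
  rw [← trace_transpose, transpose_mul, transpose_transpose]

lemma trace_transpose_sub_mul_sub (A B : Matrix m n ℝ) :
    trace ((A - B)ᵀ * (A - B)) = trace (Aᵀ * A) + trace (Bᵀ * B) - 2 * trace (Aᵀ * B) := by
  rw [transpose_sub, Matrix.sub_mul, Matrix.mul_sub, Matrix.mul_sub, trace_sub, trace_sub,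
    trace_sub, trace_transpose_mul_comm A B]
  ring

lemma two_mul_trace_transpose_mul_le (A B : Matrix m n ℝ) :
    2 * trace (Aᵀ * B) ≤ trace (Aᵀ * A) + trace (Bᵀ * B) := by
  linarith [trace_transpose_sub_mul_sub A B, trace_transpose_mul_self_nonneg (A - B)]

lemma IsPartialIsometry.trace_transpose_mul_self_le [DecidableEq m] {Q : Matrix m n ℝ}
    (hQ : IsPartialIsometry Q) (W : Matrix m p ℝ) :
    trace ((Wᵀ * Q)ᵀ * (Wᵀ * Q)) ≤ trace (Wᵀ * W) := by
  set R := 1 - Q * Qᵀ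
  have hR : Rᵀ * R = R := by
    have hQQ : Q * Qᵀ * (Q * Qᵀ) = Q * Qᵀ := by rw [← Matrix.mul_assoc, hQ]
    simp only [R, transpose_sub, transpose_one, transpose_mul, transpose_transpose, Matrix.sub_mul,
      Matrix.mul_sub, Matrix.one_mul, Matrix.mul_one, hQQ]
    abel
  have hsplit : Wᵀ * W = (Qᵀ * W)ᵀ * (Qᵀ * W) + (R * W)ᵀ * (R * W) := by
    rw [transpose_mul, transpose_mul, Matrix.mul_assoc Wᵀ Rᵀ, ← Matrix.mul_assoc Rᵀ, hR]
    simp only [R, transpose_transpose, Matrix.sub_mul, Matrix.mul_sub, Matrix.one_mul,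
      Matrix.mul_assoc]
    abel
  have hcomm : trace ((Wᵀ * Q)ᵀ * (Wᵀ * Q)) = trace ((Qᵀ * W)ᵀ * (Qᵀ * W)) := by
    rw [trace_mul_comm, transpose_mul, transpose_mul, transpose_transpose, transpose_transpose]
  rw [hcomm, hsplit, trace_add]
  linarith [trace_transpose_mul_self_nonneg (R * W)]

end Matrix

lemma frobNorm_sq {m n : ℕ} (A : Matrix (Fin m) (Fin n) ℝ) : frobNorm A ^ 2 = trace (Aᵀ * A) := by
  rw [frobNorm, Real.sq_sqrt (by positivity), Finset.sum_comm]
  simp only [trace, diag, mul_apply, transpose_apply, sq]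

lemma exists_isPartialIsometry_trace_transpose_mul_eq {m n : Type*} [Fintype m] [Fintype n]
    [DecidableEq n] (Y : Matrix m n ℝ) (μ : n → ℝ) (hY : Yᵀ * Y = diagonal μ) :
    ∃ Q : Matrix m n ℝ, IsPartialIsometry Q ∧ trace (Qᵀ * Y) = ∑ j, √(μ j) := by
  set d : n → ℝ := fun j => (√(μ j))⁻¹
  -- `(√μ)⁻¹ * μ = √μ` holds for every real `μ`, thanks to the junk values at `μ ≤ 0`
  have hdμ : ∀ j, d j * μ j = √(μ j) := fun j => by
    rw [mul_comm, ← div_eq_mul_inv, Real.div_sqrt]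
  have hQY : (Y * diagonal d)ᵀ * Y = diagonal (fun j => √(μ j)) := by
    rw [transpose_mul, diagonal_transpose, Matrix.mul_assoc, hY, diagonal_mul_diagonal]
    simp only [hdμ]
  refine ⟨Y * diagonal d, ?_, ?_⟩
  · rw [IsPartialIsometry, Matrix.mul_assoc, ← Matrix.mul_assoc _ Y, hQY, Matrix.mul_assoc,
      diagonal_mul_diagonal, diagonal_mul_diagonal]
    congr 2
    funext j
    simpa only [d, inv_inv, mul_assoc] using mul_inv_mul_cancel (√(μ j))⁻¹
  · rw [hQY, trace_diagonal]

lemma exists_orthogonal_transpose_mul_mul_eq_diagonal {n : Type*} [Fintype n] [DecidableEq n]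
    {A : Matrix n n ℝ} (hA : A.IsHermitian) :
    ∃ P : Matrix n n ℝ, Pᵀ * P = 1 ∧ Pᵀ * A * P = diagonal hA.eigenvalues := by
  refine ⟨hA.eigenvectorUnitary, ?_, ?_⟩
  · simpa [star_eq_conjTranspose, conjTranspose_eq_transpose_of_trivial] using
      mem_unitaryGroup_iff'.mp hA.eigenvectorUnitary.2
  · have h := hA.conjStarAlgAut_star_eigenvectorUnitary
    rw [Unitary.conjStarAlgAut_star_apply] at h
    simpa [star_eq_conjTranspose, conjTranspose_eq_transpose_of_trivial] using h

lemma exists_nuclearNorm_eq_trace {m n : ℕ} (X : Matrix (Fin m) (Fin n) ℝ) :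
    ∃ (Q : Matrix (Fin m) (Fin n) ℝ) (P : Matrix (Fin n) (Fin n) ℝ),
      IsPartialIsometry Q ∧ IsPartialIsometry P ∧ nuclearNorm X = trace (Qᵀ * X * P) := by
  have hG : (Xᵀ * X).IsHermitian := by
    simpa [conjTranspose_eq_transpose_of_trivial] using isHermitian_conjTranspose_mul_self X
  obtain ⟨P, hP, hPG⟩ := exists_orthogonal_transpose_mul_mul_eq_diagonal hG
  have hXP : (X * P)ᵀ * (X * P) = diagonal hG.eigenvalues := by
    rw [← hPG, transpose_mul]
    simp only [Matrix.mul_assoc]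
  obtain ⟨Q, hQ, htr⟩ := exists_isPartialIsometry_trace_transpose_mul_eq (X * P) _ hXP
  refine ⟨Q, P, hQ, isPartialIsometry_of_transpose_mul_self_eq_one hP, ?_⟩
  rw [Matrix.mul_assoc, htr]
  rfl

lemma nuclearNorm_le_of_mul_transpose_eq {m n l : ℕ} {X : Matrix (Fin m) (Fin n) ℝ}
    {W : Matrix (Fin m) (Fin l) ℝ} {H : Matrix (Fin n) (Fin l) ℝ} (hWH : W * Hᵀ = X) :
    nuclearNorm X ≤ (frobNorm W ^ 2 + frobNorm H ^ 2) / 2 := by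
  obtain ⟨Q, P, hQ, hP, hX⟩ := exists_nuclearNorm_eq_trace X
  have hX' : nuclearNorm X = trace ((Wᵀ * Q)ᵀ * (Hᵀ * P)) := by
    rw [hX, ← hWH, transpose_mul, transpose_transpose]
    simp only [Matrix.mul_assoc]
  rw [hX', frobNorm_sq, frobNorm_sq]
  linarith [two_mul_trace_transpose_mul_le (Wᵀ * Q) (Hᵀ * P),
    hQ.trace_transpose_mul_self_le W, hP.trace_transpose_mul_self_le H]

lemma frobNorm_mul_diagonal_sq {p k : ℕ} {A : Matrix (Fin p) (Fin k) ℝ} (hA : Aᵀ * A = 1)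
    (s : Fin k → ℝ) : frobNorm (A * diagonal s) ^ 2 = ∑ i, s i ^ 2 := by
  rw [frobNorm_sq, transpose_mul, diagonal_transpose, Matrix.mul_assoc, ← Matrix.mul_assoc Aᵀ, hA,
    Matrix.one_mul, diagonal_mul_diagonal, trace_diagonal]
  simp only [sq]

lemma nuclearNorm_mul_diagonal_mul_transpose_le {m n k : ℕ} {U : Matrix (Fin m) (Fin k) ℝ}
    {V : Matrix (Fin n) (Fin k) ℝ} {σ : Fin k → ℝ} (hU : Uᵀ * U = 1) (hV : Vᵀ * V = 1)
    (hσ : ∀ i, 0 ≤ σ i) : nuclearNorm (U * diagonal σ * Vᵀ) ≤ ∑ i, σ i := by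
  set s : Fin k → ℝ := fun i => √(σ i)
  have hs : ∀ i, s i ^ 2 = σ i := fun i => Real.sq_sqrt (hσ i)
  have hss : diagonal s * diagonal s = diagonal σ := by
    rw [diagonal_mul_diagonal]
    simp only [← sq, hs]
  have hX : (U * diagonal s) * (V * diagonal s)ᵀ = U * diagonal σ * Vᵀ := by
    rw [transpose_mul, diagonal_transpose, ← Matrix.mul_assoc, Matrix.mul_assoc U, hss]
  have h := nuclearNorm_le_of_mul_transpose_eq hX
  simp only [frobNorm_mul_diagonal_sq hU, frobNorm_mul_diagonal_sq hV, hs] at h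
  linarith

theorem optimal_factorization_aligned_general {m n k l : ℕ}
    (X : Matrix (Fin m) (Fin n) ℝ)
    (U : Matrix (Fin m) (Fin k) ℝ) (V : Matrix (Fin n) (Fin k) ℝ) (σ : Fin k → ℝ)
    (hU : Uᵀ * U = 1) (hV : Vᵀ * V = 1) (hσ : ∀ i, 0 < σ i)
    (hSVD : X = U * Matrix.diagonal σ * Vᵀ)
    (W : Matrix (Fin m) (Fin l) ℝ) (H : Matrix (Fin n) (Fin l) ℝ)
    (hWH : W * Hᵀ = X)
    (hopt : nuclearNorm X = (1 / 2) * (frobNorm W ^ 2 + frobNorm H ^ 2)) :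
    Wᵀ * U = Hᵀ * V := by
  have hinner : trace ((Wᵀ * U)ᵀ * (Hᵀ * V)) = ∑ i, σ i := by
    rw [transpose_mul, transpose_transpose, Matrix.mul_assoc, ← Matrix.mul_assoc W,
      ← Matrix.mul_assoc, hWH, hSVD, ← Matrix.mul_assoc, ← Matrix.mul_assoc, hU, Matrix.one_mul,
      Matrix.mul_assoc, hV, Matrix.mul_one, trace_diagonal]
  have hnuc : nuclearNorm X ≤ ∑ i, σ i :=
    hSVD ▸ nuclearNorm_mul_diagonal_mul_transpose_le hU hV fun i => (hσ i).le
  have hW := (isPartialIsometry_of_transpose_mul_self_eq_one hU).trace_transpose_mul_self_le W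
  have hH := (isPartialIsometry_of_transpose_mul_self_eq_one hV).trace_transpose_mul_self_le H
  rw [frobNorm_sq, frobNorm_sq] at hopt
  have hdiff : trace ((Wᵀ * U - Hᵀ * V)ᵀ * (Wᵀ * U - Hᵀ * V)) = 0 := by
    refine le_antisymm ?_ (trace_transpose_mul_self_nonneg _)
    rw [trace_transpose_sub_mul_sub]
    linarith
  exact sub_eq_zero.mp (trace_transpose_mul_self_eq_zero_iff.mp hdiff)

/-- If `X = U diag(σ) Vᵀ` is an SVD of `X` with positive singular values and
`k = rank X`, then any factorization `X = W Hᵀ` attaining the nuclear norm in the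
variational characterization satisfies `Wᵀ U = Hᵀ V`. -/
theorem optimal_factorization_aligned {m n k l : ℕ}
    (X : Matrix (Fin m) (Fin n) ℝ)
    (U : Matrix (Fin m) (Fin k) ℝ) (V : Matrix (Fin n) (Fin k) ℝ) (σ : Fin k → ℝ)
    (hU : Uᵀ * U = 1) (hV : Vᵀ * V = 1) (hσ : ∀ i, 0 < σ i)
    (hSVD : X = U * Matrix.diagonal σ * Vᵀ)
    (hrank : X.rank = k)
    (W : Matrix (Fin m) (Fin l) ℝ) (H : Matrix (Fin n) (Fin l) ℝ)
    (hWH : W * Hᵀ = X)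
    (hopt : nuclearNorm X = (1 / 2) * (frobNorm W ^ 2 + frobNorm H ^ 2)) :
    Wᵀ * U = Hᵀ * V :=
  optimal_factorization_aligned_general X U V σ hU hV hσ hSVD W H hWH hopt
end

section
/- Under the same hypotheses as above, Σ_{t=0}^k ε_t a_t ≤ (C² + C sqrt(C² + 4ΓD)) / (2Γ). -/
/-!
By Cauchy–Schwarz, `Σ ε_t a_t ≤ C x` with `x = √(Σ a_t²)`, so the hypothesis gives the quadratic
inequality `Γ x² ≤ D + C x`. Hence `x` is at most the positive root `(C + √(C² + 4ΓD)) / (2Γ)`,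
and multiplying by `C` bounds `Σ ε_t a_t`.
-/

open Finset

theorem le_quadratic_root_of_sq_le {Γ C D x : ℝ} (hΓ : 0 < Γ) (h : Γ * x ^ 2 ≤ D + C * x) :
    x ≤ (C + √(C ^ 2 + 4 * Γ * D)) / (2 * Γ) := by
  -- completing the square: `(2Γx - C)² = C² + 4Γ(Γx² - Cx) ≤ C² + 4ΓD`
  have hroot : 2 * Γ * x - C ≤ √(C ^ 2 + 4 * Γ * D) :=
    Real.le_sqrt_of_sq_le <| by
      nlinarith [mul_le_mul_of_nonneg_left h (by positivity : (0 : ℝ) ≤ 4 * Γ)]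
  rw [le_div_iff₀ (by positivity)]
  linarith

theorem sum_mul_le_of_sum_sq_le {ι : Type*} (s : Finset ι) (ε a : ι → ℝ) {C : ℝ} (hC : 0 ≤ C)
    (hε : ∑ t ∈ s, ε t ^ 2 ≤ C ^ 2) :
    ∑ t ∈ s, ε t * a t ≤ C * √(∑ t ∈ s, a t ^ 2) :=
  (Real.sum_mul_le_sqrt_mul_sqrt s ε a).trans <|
    mul_le_mul_of_nonneg_right ((Real.sqrt_le_left hC).2 hε) (Real.sqrt_nonneg _)

theorem sqrt_sum_sq_le_quadratic_root {ι : Type*} (s : Finset ι) (ε a : ι → ℝ) {Γ C D : ℝ}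
    (hΓ : 0 < Γ) (hC : 0 ≤ C)
    (hmain : Γ * ∑ t ∈ s, a t ^ 2 ≤ D + ∑ t ∈ s, ε t * a t)
    (hε : ∑ t ∈ s, ε t ^ 2 ≤ C ^ 2) :
    √(∑ t ∈ s, a t ^ 2) ≤ (C + √(C ^ 2 + 4 * Γ * D)) / (2 * Γ) := by
  have hS : 0 ≤ ∑ t ∈ s, a t ^ 2 := sum_nonneg fun t _ => sq_nonneg (a t)
  refine le_quadratic_root_of_sq_le hΓ ?_
  rw [Real.sq_sqrt hS]
  linarith [sum_mul_le_of_sum_sq_le s ε a hC hε]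

theorem sum_eps_a_bound_general (Γ C D : ℝ) (hΓ : 0 < Γ) (hC : 0 ≤ C)
    (k : ℕ) (a ε : ℕ → ℝ)
    (hmain : Γ * ∑ t ∈ Finset.range (k + 1), (a t) ^ 2 ≤
      D + ∑ t ∈ Finset.range (k + 1), ε t * a t)
    (hC2 : ∑ t ∈ Finset.range (k + 1), (ε t) ^ 2 ≤ C ^ 2) :
    ∑ t ∈ Finset.range (k + 1), ε t * a t ≤
      (C ^ 2 + C * Real.sqrt (C ^ 2 + 4 * Γ * D)) / (2 * Γ) :=
  calc ∑ t ∈ range (k + 1), ε t * a t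
      ≤ C * √(∑ t ∈ range (k + 1), a t ^ 2) := sum_mul_le_of_sum_sq_le _ ε a hC hC2
    _ ≤ C * ((C + √(C ^ 2 + 4 * Γ * D)) / (2 * Γ)) :=
        mul_le_mul_of_nonneg_left (sqrt_sum_sq_le_quadratic_root _ ε a hΓ hC hmain hC2) hC
    _ = (C ^ 2 + C * √(C ^ 2 + 4 * Γ * D)) / (2 * Γ) := by ring

/-- Under the same hypotheses, `Σ ε_t a_t ≤ (C² + C sqrt(C² + 4ΓD)) / (2Γ)`. -/
theorem sum_eps_a_bound (Γ C D : ℝ) (hΓ : 0 < Γ) (hC : 0 ≤ C) (hD : 0 ≤ D)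
    (k : ℕ) (a ε : ℕ → ℝ)
    (ha : ∀ t ≤ k, 0 ≤ a t) (hε : ∀ t ≤ k, 0 ≤ ε t)
    (hmain : Γ * ∑ t ∈ Finset.range (k + 1), (a t) ^ 2 ≤
      D + ∑ t ∈ Finset.range (k + 1), ε t * a t)
    (hC2 : ∑ t ∈ Finset.range (k + 1), (ε t) ^ 2 ≤ C ^ 2) :
    ∑ t ∈ Finset.range (k + 1), ε t * a t ≤
      (C ^ 2 + C * Real.sqrt (C ^ 2 + 4 * Γ * D)) / (2 * Γ) :=
  sum_eps_a_bound_general Γ C D hΓ hC k a ε hmain hC2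
end

section
/- Let f have L-Lipschitz gradient, 0 < α ≤ α_max, δ ∈ (0,1), and suppose g ∈ ∇f(X̃) + α^{-1}(X_+ − X̃) + λ∂‖X_+‖_* with ‖g‖ ≤ ε, and f(X_+) ≤ f(X̃) + ⟨∇f(X̃), X_+ − X̃⟩ + (δ/α)‖X_+ − X̃‖². Then F(X_+) ≤ F(X̃) + ε‖X_+ − X̃‖ − ((1−δ)/α_max)‖X_+ − X̃‖², where F = f + λ‖·‖_*. -/
open Matrix

def frobInner {m n : ℕ} (A B : Matrix (Fin m) (Fin n) ℝ) : ℝ :=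
  ∑ i, ∑ j, A i j * B i j

/-- Convex subdifferential of `φ` at `X` with respect to the Frobenius inner product. -/
def subderivAt {m n : ℕ} (φ : Matrix (Fin m) (Fin n) ℝ → ℝ) (X : Matrix (Fin m) (Fin n) ℝ) :
    Set (Matrix (Fin m) (Fin n) ℝ) :=
  {G | ∀ Y, φ X + frobInner G (Y - X) ≤ φ Y}

/-!
Testing the subgradient inequality for `s ∈ ∂‖X₊‖_*` at `X̃` and adding the backtracking
condition gives `F(X₊) ≤ F(X̃) + ⟨g, X₊ − X̃⟩ − ((1 − δ)/α)‖X₊ − X̃‖²`, since the `α⁻¹`-term of `g`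
contributes exactly `α⁻¹‖X₊ − X̃‖²`. Cauchy–Schwarz with `‖g‖ ≤ ε` and `α ≤ α_max` finish.
-/

section Frobenius

variable {m n : ℕ}

lemma frobNorm_nonneg (A : Matrix (Fin m) (Fin n) ℝ) : 0 ≤ frobNorm A :=
  Real.sqrt_nonneg _

lemma frobInner_self (A : Matrix (Fin m) (Fin n) ℝ) : frobInner A A = frobNorm A ^ 2 := by
  rw [frobNorm, Real.sq_sqrt (by positivity)]
  simp only [frobInner, sq]

lemma frobInner_le_frobNorm_mul (A B : Matrix (Fin m) (Fin n) ℝ) :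
    frobInner A B ≤ frobNorm A * frobNorm B := by
  simpa [frobInner, frobNorm, Fintype.sum_prod_type] using
    Real.sum_mul_le_sqrt_mul_sqrt Finset.univ (fun p : Fin m × Fin n => A p.1 p.2)
      (fun p => B p.1 p.2)

lemma frobInner_add_left (A B C : Matrix (Fin m) (Fin n) ℝ) :
    frobInner (A + B) C = frobInner A C + frobInner B C := by
  simp [frobInner, add_mul, Finset.sum_add_distrib]

lemma frobInner_smul_left (c : ℝ) (A B : Matrix (Fin m) (Fin n) ℝ) :
    frobInner (c • A) B = c * frobInner A B := by
  simp [frobInner, Finset.mul_sum, mul_assoc]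

lemma frobInner_neg_right (A B : Matrix (Fin m) (Fin n) ℝ) :
    frobInner A (-B) = -frobInner A B := by
  simp [frobInner]

lemma le_add_frobInner_of_mem_subderivAt {φ : Matrix (Fin m) (Fin n) ℝ → ℝ}
    {X s : Matrix (Fin m) (Fin n) ℝ} (hs : s ∈ subderivAt φ X) (Y : Matrix (Fin m) (Fin n) ℝ) :
    φ X ≤ φ Y + frobInner s (X - Y) := by
  have h := hs Y
  rw [← neg_sub, frobInner_neg_right] at h
  linarith

lemma prox_step_decrease_of_backtracking (f φ : Matrix (Fin m) (Fin n) ℝ → ℝ)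
    {lam α δ : ℝ} (hlam : 0 ≤ lam) {Xt Xp G s : Matrix (Fin m) (Fin n) ℝ}
    (hs : s ∈ subderivAt φ Xp)
    (hback : f Xp ≤ f Xt + frobInner G (Xp - Xt) + (δ / α) * frobNorm (Xp - Xt) ^ 2) :
    f Xp + lam * φ Xp ≤ f Xt + lam * φ Xt + frobInner (G + α⁻¹ • (Xp - Xt) + lam • s) (Xp - Xt)
      - ((1 - δ) / α) * frobNorm (Xp - Xt) ^ 2 := by
  have hφ : lam * φ Xp ≤ lam * φ Xt + lam * frobInner s (Xp - Xt) := by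
    rw [← mul_add]
    exact mul_le_mul_of_nonneg_left (le_add_frobInner_of_mem_subderivAt hs Xt) hlam
  rw [frobInner_add_left, frobInner_add_left, frobInner_smul_left, frobInner_smul_left,
    frobInner_self]
  linear_combination hback + hφ

end Frobenius

theorem inexact_prox_grad_decrease_general {m n : ℕ}
    (f : Matrix (Fin m) (Fin n) ℝ → ℝ) (gf : Matrix (Fin m) (Fin n) ℝ → Matrix (Fin m) (Fin n) ℝ)
    (lam α αmax δ ε : ℝ)
    (hlam : 0 < lam) (hα : 0 < α) (hαmax : α ≤ αmax) (hδ1 : δ < 1)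
    (Xt Xp : Matrix (Fin m) (Fin n) ℝ) (g : Matrix (Fin m) (Fin n) ℝ)
    -- g ∈ ∇f(X̃) + α⁻¹(X₊ − X̃) + λ ∂‖X₊‖_* with ‖g‖ ≤ ε:
    (hg : ∃ s ∈ subderivAt nuclearNorm Xp, g = gf Xt + α⁻¹ • (Xp - Xt) + lam • s)
    (hgsmall : frobNorm g ≤ ε)
    -- backtracking condition:
    (hback : f Xp ≤ f Xt + frobInner (gf Xt) (Xp - Xt) + (δ / α) * frobNorm (Xp - Xt) ^ 2) :
    f Xp + lam * nuclearNorm Xp ≤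
      f Xt + lam * nuclearNorm Xt + ε * frobNorm (Xp - Xt) -
        ((1 - δ) / αmax) * frobNorm (Xp - Xt) ^ 2 := by
  obtain ⟨s, hs, rfl⟩ := hg
  have hresidual : frobInner (gf Xt + α⁻¹ • (Xp - Xt) + lam • s) (Xp - Xt)
      ≤ ε * frobNorm (Xp - Xt) :=
    (frobInner_le_frobNorm_mul _ _).trans
      (mul_le_mul_of_nonneg_right hgsmall (frobNorm_nonneg _))
  calc f Xp + lam * nuclearNorm Xp
      ≤ f Xt + lam * nuclearNorm Xt + frobInner (gf Xt + α⁻¹ • (Xp - Xt) + lam • s) (Xp - Xt)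
          - ((1 - δ) / α) * frobNorm (Xp - Xt) ^ 2 :=
        prox_step_decrease_of_backtracking f nuclearNorm hlam.le hs hback
    _ ≤ _ := by gcongr

/-- Sufficient decrease of an inexact proximal gradient step with backtracking. -/
theorem inexact_prox_grad_decrease {m n : ℕ}
    (f : Matrix (Fin m) (Fin n) ℝ → ℝ) (gf : Matrix (Fin m) (Fin n) ℝ → Matrix (Fin m) (Fin n) ℝ)
    (L lam α αmax δ ε : ℝ)
    (hL : 0 ≤ L) (hlam : 0 < lam) (hα : 0 < α) (hαmax : α ≤ αmax) (hδ0 : 0 < δ) (hδ1 : δ < 1)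
    (hε : 0 ≤ ε)
    -- f is convex with gradient gf:
    (hconv : ∀ X Y, f X + frobInner (gf X) (Y - X) ≤ f Y)
    -- gf is L-Lipschitz (Frobenius norm):
    (hLip : ∀ X Y, frobNorm (gf X - gf Y) ≤ L * frobNorm (X - Y))
    (Xt Xp : Matrix (Fin m) (Fin n) ℝ) (g : Matrix (Fin m) (Fin n) ℝ)
    -- g ∈ ∇f(X̃) + α⁻¹(X₊ − X̃) + λ ∂‖X₊‖_* with ‖g‖ ≤ ε:
    (hg : ∃ s ∈ subderivAt nuclearNorm Xp, g = gf Xt + α⁻¹ • (Xp - Xt) + lam • s)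
    (hgsmall : frobNorm g ≤ ε)
    -- backtracking condition:
    (hback : f Xp ≤ f Xt + frobInner (gf Xt) (Xp - Xt) + (δ / α) * frobNorm (Xp - Xt) ^ 2) :
    f Xp + lam * nuclearNorm Xp ≤
      f Xt + lam * nuclearNorm Xt + ε * frobNorm (Xp - Xt) -
        ((1 - δ) / αmax) * frobNorm (Xp - Xt) ^ 2 :=
  inexact_prox_grad_decrease_general f gf lam α αmax δ ε hlam hα hαmax hδ1 Xt Xp g hg hgsmall hback
end
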